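/- Suppose X = f(Z) + E_X and Y = g(Z) + E_Y where E_X, E_Y are jointly independent of Z. Then X ⟂ Y | Z if and only if E_X ⟂ E_Y. (Special case of the latent characterization: additive noise models.) -/

import Mathlib

/-!
Adding `σ(Z)` to both sides does not change conditional independence given `Z`: on rectangles
`A ∩ C` with `C ∈ σ(Z)` the indicator of `C` factors out of the conditional expectation. Moreover
`σ(f(Z) + E) ⊔ σ(Z) = σ(E) ⊔ σ(Z)`. Hence `X ⟂ Y | Z` is equivalent to `E_X ⟂ E_Y | Z`. Since
`(E_X, E_Y)` is independent of `Z`, the conditional probabilities of events of `E_X` and `E_Y`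
given `Z` are the unconditional ones, so `E_X ⟂ E_Y | Z` is plain independence.
-/

open MeasureTheory ProbabilityTheory MeasurableSpace Set

namespace MeasurableSpace

variable {Ω : Type*}

lemma isPiSystem_image2_inter_measurableSet (m₁ m₂ : MeasurableSpace Ω) :
    IsPiSystem (image2 (· ∩ ·) {s | MeasurableSet[m₁] s} {s | MeasurableSet[m₂] s}) := by
  rintro _ ⟨a, ha, c, hc, rfl⟩ _ ⟨b, hb, d, hd, rfl⟩ -
  exact ⟨a ∩ b, ha.inter hb, c ∩ d, hc.inter hd, inter_inter_inter_comm a b c d⟩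

lemma generateFrom_image2_inter_measurableSet (m₁ m₂ : MeasurableSpace Ω) :
    generateFrom (image2 (· ∩ ·) {s | MeasurableSet[m₁] s} {s | MeasurableSet[m₂] s})
      = m₁ ⊔ m₂ := by
  refine le_antisymm (generateFrom_le ?_) (sup_le (fun s hs ↦ ?_) (fun s hs ↦ ?_))
  · rintro _ ⟨a, ha, c, hc, rfl⟩
    exact (le_sup_left (b := m₂) a ha).inter (le_sup_right (a := m₁) c hc)
  · exact measurableSet_generateFrom ⟨s, hs, univ, MeasurableSet.univ, inter_univ s⟩
  · exact measurableSet_generateFrom ⟨univ, MeasurableSet.univ, s, hs, univ_inter s⟩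

lemma comap_add_comp_sup_comap {G α : Type*} [AddGroup G] [mG : MeasurableSpace G]
    [MeasurableAdd₂ G] [MeasurableNeg G] [mα : MeasurableSpace α] {φ : α → G}
    (hφ : Measurable φ) (E : Ω → G) (Z : Ω → α) :
    mG.comap (fun ω ↦ φ (Z ω) + E ω) ⊔ mα.comap Z = mG.comap E ⊔ mα.comap Z := by
  refine le_antisymm (sup_le ?_ le_sup_right) (sup_le ?_ le_sup_right)
  · exact (((hφ.comp (comap_measurable Z)).mono le_sup_right le_rfl).add
      ((comap_measurable E).mono le_sup_left le_rfl)).comap_le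
  · have hE : Measurable[mG.comap (fun ω ↦ φ (Z ω) + E ω) ⊔ mα.comap Z]
        (fun ω ↦ -φ (Z ω) + (φ (Z ω) + E ω)) :=
      ((hφ.comp (comap_measurable Z)).mono le_sup_right le_rfl).neg.add
        ((comap_measurable _).mono le_sup_left le_rfl)
    simpa only [neg_add_cancel_left] using hE.comap_le

end MeasurableSpace

namespace ProbabilityTheory

variable {Ω : Type*} {m' m₁ m₂ mΩ : MeasurableSpace Ω} {μ : Measure Ω} [IsFiniteMeasure μ]

lemma condExp_indicator_inter_of_measurableSet {s c : Set Ω} (hs : MeasurableSet s)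
    (hc : MeasurableSet[m'] c) :
    μ⟦s ∩ c | m'⟧ =ᵐ[μ] c.indicator (μ⟦s | m'⟧) := by
  rw [inter_comm, ← indicator_indicator]
  exact condExp_indicator ((integrable_const (1 : ℝ)).indicator hs) hc

lemma condExp_indicator_ae_eq_measureReal_of_indep (hm' : m' ≤ mΩ) (hm₁ : m₁ ≤ mΩ)
    (hind : Indep m₁ m' μ) {s : Set Ω} (hs : MeasurableSet[m₁] s) :
    μ⟦s | m'⟧ =ᵐ[μ] fun _ ↦ μ.real s := by
  refine (condExp_indep_eq hm₁ hm' (stronglyMeasurable_const.indicator hs) hind).trans ?_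
  exact Filter.Eventually.of_forall fun _ ↦ integral_indicator_one (hm₁ s hs)

variable [StandardBorelSpace Ω] {hm' : m' ≤ mΩ}

lemma CondIndepSet.inter_of_measurableSet {s t c d : Set Ω} (hs : MeasurableSet s)
    (ht : MeasurableSet t) (hc : MeasurableSet[m'] c) (hd : MeasurableSet[m'] d)
    (h : CondIndepSet m' hm' s t μ) :
    CondIndepSet m' hm' (s ∩ c) (t ∩ d) μ := by
  rw [condIndepSet_iff _ _ _ _ hs ht] at h
  rw [condIndepSet_iff _ _ _ _ (hs.inter (hm' c hc)) (ht.inter (hm' d hd)),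
    inter_inter_inter_comm]
  filter_upwards [condExp_indicator_inter_of_measurableSet (hs.inter ht) (hc.inter hd), h,
    condExp_indicator_inter_of_measurableSet hs hc,
    condExp_indicator_inter_of_measurableSet ht hd] with ω hst hmul hsc htd
  rw [hst, Pi.mul_apply, hsc, htd, ← inter_indicator_mul]
  by_cases hω : ω ∈ c ∩ d <;> simp [hω, hmul]

lemma CondIndep.sup_cond (hm₁ : m₁ ≤ mΩ) (hm₂ : m₂ ≤ mΩ) (h : CondIndep m' m₁ m₂ hm' μ) :
    CondIndep m' (m₁ ⊔ m') (m₂ ⊔ m') hm' μ := by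
  refine CondIndepSets.condIndep (sup_le hm₁ hm') (sup_le hm₂ hm')
    (isPiSystem_image2_inter_measurableSet m₁ m')
    (isPiSystem_image2_inter_measurableSet m₂ m')
    (generateFrom_image2_inter_measurableSet m₁ m').symm
    (generateFrom_image2_inter_measurableSet m₂ m').symm ?_
  have hrect : ∀ m ≤ mΩ,
      ∀ s ∈ image2 (· ∩ ·) {s | MeasurableSet[m] s} {s | MeasurableSet[m'] s}, MeasurableSet s := by
    rintro m hm _ ⟨a, ha, c, hc, rfl⟩
    exact (hm a ha).inter (hm' c hc)
  rw [condIndepSets_iff _ _ _ _ (hrect m₁ hm₁) (hrect m₂ hm₂)]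
  rintro _ _ ⟨a, ha, c, hc, rfl⟩ ⟨b, hb, d, hd, rfl⟩
  have hs := hm₁ a ha
  have ht := hm₂ b hb
  exact (condIndepSet_iff _ _ _ _ (hs.inter (hm' c hc)) (ht.inter (hm' d hd)) μ).mp
    ((h.condIndepSet_of_measurableSet ha hb).inter_of_measurableSet hs ht hc hd)

lemma condIndep_sup_cond_iff (hm₁ : m₁ ≤ mΩ) (hm₂ : m₂ ≤ mΩ) :
    CondIndep m' (m₁ ⊔ m') (m₂ ⊔ m') hm' μ ↔ CondIndep m' m₁ m₂ hm' μ :=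
  ⟨fun h ↦ condIndep_of_condIndep_of_le_left (condIndep_of_condIndep_of_le_right h le_sup_left)
    le_sup_left, CondIndep.sup_cond hm₁ hm₂⟩

lemma condIndep_iff_indep_of_indep_sup [NeZero μ] (hm₁ : m₁ ≤ mΩ) (hm₂ : m₂ ≤ mΩ)
    (hind : Indep (m₁ ⊔ m₂) m' μ) :
    CondIndep m' m₁ m₂ hm' μ ↔ Indep m₁ m₂ μ := by
  have hconst {s : Set Ω} (hs : MeasurableSet[m₁ ⊔ m₂] s) :=
    condExp_indicator_ae_eq_measureReal_of_indep hm' (sup_le hm₁ hm₂) hind hs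
  rw [condIndep_iff _ _ _ _ hm₁ hm₂, Indep_iff]
  refine forall₄_congr fun s t hs ht ↦ ?_
  have hs' : MeasurableSet[m₁ ⊔ m₂] s := le_sup_left (b := m₂) s hs
  have ht' : MeasurableSet[m₁ ⊔ m₂] t := le_sup_right (a := m₁) t ht
  rw [(hconst (hs'.inter ht')).congr_left, ((hconst hs').mul (hconst ht')).congr_right,
    Filter.EventuallyEq]
  simp only [Pi.mul_apply, Filter.eventually_const, measureReal_def]
  rw [← ENNReal.toReal_mul, ENNReal.toReal_eq_toReal_iff' (measure_ne_top _ _)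
    (ENNReal.mul_ne_top (measure_ne_top _ _) (measure_ne_top _ _))]

end ProbabilityTheory

theorem additive_noise_cond_indep_iff_noise_indep_general
    {Ω : Type*} [MeasurableSpace Ω] [StandardBorelSpace Ω] {d : ℕ}
    (P : Measure Ω) [IsProbabilityMeasure P]
    (EX EY : Ω → ℝ) (Z : Ω → (Fin d → ℝ))
    (hEX : Measurable EX) (hEY : Measurable EY) (hZ : Measurable Z)
    (f g : (Fin d → ℝ) → ℝ) (hf : Measurable f) (hg : Measurable g)
    (hindep : IndepFun (fun ω => (EX ω, EY ω)) Z P)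
    (X Y : Ω → ℝ)
    (hX : ∀ ω, X ω = f (Z ω) + EX ω) (hY : ∀ ω, Y ω = g (Z ω) + EY ω) :
    CondIndepFun (MeasurableSpace.comap Z inferInstance) hZ.comap_le X Y P ↔
      IndepFun EX EY P := by
  obtain rfl : X = fun ω ↦ f (Z ω) + EX ω := funext hX
  obtain rfl : Y = fun ω ↦ g (Z ω) + EY ω := funext hY
  have hXm : Measurable fun ω ↦ f (Z ω) + EX ω := (hf.comp hZ).add hEX
  have hYm : Measurable fun ω ↦ g (Z ω) + EY ω := (hg.comp hZ).add hEY
  have hnoise : Indep (MeasurableSpace.comap EX inferInstance ⊔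
      MeasurableSpace.comap EY inferInstance) (MeasurableSpace.comap Z inferInstance) P := by
    rw [← comap_prodMk]
    exact (IndepFun_iff_Indep _ _ _).mp hindep
  rw [condIndepFun_iff_condIndep, IndepFun_iff_Indep,
    ← condIndep_sup_cond_iff hXm.comap_le hYm.comap_le,
    comap_add_comp_sup_comap hf, comap_add_comp_sup_comap hg,
    condIndep_sup_cond_iff hEX.comap_le hEY.comap_le,
    condIndep_iff_indep_of_indep_sup hEX.comap_le hEY.comap_le hnoise]

/-- For additive noise models `X = f(Z) + E_X`, `Y = g(Z) + E_Y` with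
`(E_X, E_Y)` jointly independent of `Z`, `X ⟂ Y | Z` iff `E_X ⟂ E_Y`. -/
theorem additive_noise_cond_indep_iff_noise_indep
    {Ω : Type*} [MeasurableSpace Ω] [StandardBorelSpace Ω] {d : ℕ}
    (P : Measure Ω) [IsProbabilityMeasure P]
    (EX EY : Ω → ℝ) (Z : Ω → (Fin d → ℝ))
    (hEX : Measurable EX) (hEY : Measurable EY) (hZ : Measurable Z)
    (f g : (Fin d → ℝ) → ℝ) (hf : Measurable f) (hg : Measurable g)
    (hindep : IndepFun (fun ω => (EX ω, EY ω)) Z P)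
    (X Y : Ω → ℝ)
    (hX : ∀ ω, X ω = f (Z ω) + EX ω) (hY : ∀ ω, Y ω = g (Z ω) + EY ω)
    (p : ℝ × ℝ × (Fin d → ℝ) → ℝ) (hp_pos : ∀ v, 0 < p v) (hp_cont : Continuous p)
    (hp : P.map (fun ω => (X ω, Y ω, Z ω)) =
      volume.withDensity fun v => ENNReal.ofReal (p v)) :
    CondIndepFun (MeasurableSpace.comap Z inferInstance) hZ.comap_le X Y P ↔
      IndepFun EX EY P :=
  additive_noise_cond_indep_iff_noise_indep_general P EX EY Z hEX hEY hZ f g hf hg hindep X Y hX hY
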